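/- arXiv:2501.14796 — 2 statements merged into one kernel-verified Lean document; each statement's English description precedes it below -/
import Mathlib

section
/- A semi-Riemannian manifold of dimension n ≥ 2 is Einstein if and only if its projective curvature tensor satisfies the identity P(X,Y1,Y2,Y3) + P(X,Y2,Y3,Y1) + P(X,Y3,Y1,Y2) = 0 for all vector fields X, Y1, Y2, Y3. -/
open Finset

/-!
Pair symmetry turns the first Bianchi identity into the cyclic identity of `R` in its last three
slots, so the cyclic identity for `P` is equivalent to the same identity for the Ricci correction
term `g(X,W) S(Y,Z) - g(Y,W) S(X,Z)`. For `S = c g` that cyclic sum cancels by the symmetry of `g`.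
Conversely, contracting the vanishing cyclic sum over its two middle slots with `g⁻¹` leaves
`κ g - n S = 0`.
-/

section ProjectiveCurvature

variable {V : Type*} [AddCommGroup V] [Module ℝ V]

theorem cyclic_last_three_of_bianchi {R : V →ₗ[ℝ] V →ₗ[ℝ] V →ₗ[ℝ] V →ₗ[ℝ] ℝ}
    (hR2 : ∀ X Y Z W, R X Y Z W = - R X Y W Z)
    (hR3 : ∀ X Y Z W, R X Y Z W = R Z W X Y)
    (hR4 : ∀ X Y Z W, R X Y Z W + R Y Z X W + R Z X Y W = 0) (X A B C : V) :
    R X A B C + R X B C A + R X C A B = 0 := by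
  linear_combination hR3 X A B C + hR2 B C X A + hR3 X B C A + hR2 C A X B +
    hR3 X C A B + hR2 A B X C - hR4 A B C X

def cyclicSumLastThree {α β M : Type*} [Add M] (T : α → β → β → β → M) (X : α)
    (Y₁ Y₂ Y₃ : β) : M :=
  T X Y₁ Y₂ Y₃ + T X Y₂ Y₃ Y₁ + T X Y₃ Y₁ Y₂

def projCurvCorrection (g S : V →ₗ[ℝ] V →ₗ[ℝ] ℝ) (X Y Z W : V) : ℝ :=
  g X W * S Y Z - g Y W * S X Z

theorem cyclicSumLastThree_projCurvCorrection_of_einstein {g S : V →ₗ[ℝ] V →ₗ[ℝ] ℝ}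
    (hgsym : ∀ X Y, g X Y = g Y X) {c : ℝ} (hE : ∀ X Y, S X Y = c * g X Y) (X Y₁ Y₂ Y₃ : V) :
    cyclicSumLastThree (projCurvCorrection g S) X Y₁ Y₂ Y₃ = 0 := by
  simp only [cyclicSumLastThree, projCurvCorrection, hE]
  linear_combination
    c * (g X Y₃ * hgsym Y₁ Y₂ + g X Y₁ * hgsym Y₂ Y₃ + g X Y₂ * hgsym Y₃ Y₁)

def IsMetricInverse {n : ℕ} (e : Module.Basis (Fin n) ℝ V) (g : V →ₗ[ℝ] V →ₗ[ℝ] ℝ)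
    (ginv : Fin n → Fin n → ℝ) : Prop :=
  ∀ a c, ∑ b, ginv a b * g (e b) (e c) = if a = c then 1 else 0

variable {n : ℕ} (e : Module.Basis (Fin n) ℝ V) {g : V →ₗ[ℝ] V →ₗ[ℝ] ℝ}
  {ginv : Fin n → Fin n → ℝ}

theorem sum_ginv_mul_eq_repr (hginv : IsMetricInverse e g ginv)
    (a : Fin n) (Y : V) : ∑ b, ginv a b * g (e b) Y = e.repr Y a := by
  have hcoord : ∑ b, ginv a b • g (e b) = e.coord a := e.ext fun c => by
    simpa [Finsupp.single_apply, eq_comm] using hginv a c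
  simpa using LinearMap.congr_fun hcoord Y

theorem ginv_symm (hginv : IsMetricInverse e g ginv)
    (hgsym : ∀ X Y, g X Y = g Y X) (a b : Fin n) : ginv a b = ginv b a := by
  have hinv : (Matrix.of fun a b => g (e a) (e b))⁻¹ = Matrix.of ginv :=
    Matrix.inv_eq_left_inv <| by ext a c; simpa [Matrix.mul_apply, Matrix.one_apply] using hginv a c
  have hsymm : (Matrix.of fun a b => g (e a) (e b)).IsSymm :=
    Matrix.IsSymm.ext fun a b => hgsym (e b) (e a)
  simpa [hinv] using (hsymm.inv.apply a b).symm

theorem contract_mul_metric (hginv : IsMetricInverse e g ginv)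
    (f : V →ₗ[ℝ] ℝ) (Y : V) : ∑ a, ∑ b, ginv a b * (f (e a) * g (e b) Y) = f Y := by
  calc ∑ a, ∑ b, ginv a b * (f (e a) * g (e b) Y)
      = ∑ a, f (e a) * ∑ b, ginv a b * g (e b) Y := by
        simp_rw [mul_sum, mul_left_comm]
    _ = f Y := by
        simp_rw [sum_ginv_mul_eq_repr e hginv]
        conv_rhs => rw [← e.sum_repr Y, map_sum]
        simp only [map_smul, smul_eq_mul, mul_comm]

theorem contract_metric_mul (hginv : IsMetricInverse e g ginv) (hgsym : ∀ X Y, g X Y = g Y X)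
    (f : V →ₗ[ℝ] ℝ) (Y : V) : ∑ a, ∑ b, ginv a b * (g (e a) Y * f (e b)) = f Y := by
  rw [sum_comm, ← contract_mul_metric e hginv f Y]
  simp_rw [ginv_symm e hginv hgsym, hgsym _ Y, mul_comm (g _ _)]

theorem contract_metric_eq_dim (hginv : IsMetricInverse e g ginv) :
    ∑ a, ∑ b, ginv a b * g (e b) (e a) = n := by
  simp [hginv _ _]

theorem einstein_of_cyclicSumLastThree_projCurvCorrection {S : V →ₗ[ℝ] V →ₗ[ℝ] ℝ}
    (hginv : IsMetricInverse e g ginv)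
    (hgsym : ∀ X Y, g X Y = g Y X) (hSsym : ∀ X Y, S X Y = S Y X)
    (h : ∀ X A B Y, cyclicSumLastThree (projCurvCorrection g S) X A B Y = 0) (X Y : V) :
    (n : ℝ) * S X Y = (∑ a, ∑ b, ginv a b * S (e a) (e b)) * g X Y := by
  have hcontr : ∑ a, ∑ b, ginv a b * cyclicSumLastThree (projCurvCorrection g S) X (e a) (e b) Y
      = 0 := by
    simp [h]
  simp only [cyclicSumLastThree, projCurvCorrection, mul_add, mul_sub, sum_add_distrib,
    sum_sub_distrib] at hcontr
  have h₁ : ∑ a, ∑ b, ginv a b * (g X Y * S (e a) (e b))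
      = (∑ a, ∑ b, ginv a b * S (e a) (e b)) * g X Y := by
    simp_rw [mul_left_comm _ (g X Y), ← mul_sum, mul_comm]
  have h₂ := contract_metric_mul e hginv hgsym (S X) Y
  have h₃ : ∑ a, ∑ b, ginv a b * (g X (e a) * S (e b) Y) = S X Y := by
    simp_rw [hgsym X, hSsym _ Y, contract_metric_mul e hginv hgsym (S Y) X]
  have h₄ : ∑ a, ∑ b, ginv a b * (g (e b) (e a) * S X Y) = n * S X Y := by
    simp_rw [← mul_assoc, ← sum_mul, contract_metric_eq_dim e hginv]
  have h₅ : ∑ a, ∑ b, ginv a b * (g X (e b) * S Y (e a)) = S X Y := by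
    simp_rw [hgsym X, mul_comm (g _ X), contract_mul_metric e hginv (S Y) X, hSsym]
  have h₆ : ∑ a, ∑ b, ginv a b * (g Y (e b) * S X (e a)) = S X Y := by
    simp_rw [hgsym Y, mul_comm (g _ Y), contract_mul_metric e hginv (S X) Y]
  linear_combination h₁ - h₂ + h₃ - h₄ + h₅ - h₆ - hcontr

end ProjectiveCurvature

theorem einstein_iff_projCurv_cyclic_last_three_general
    {V : Type*} [AddCommGroup V] [Module ℝ V] (n : ℕ) (hn : 2 ≤ n)
    (e : Module.Basis (Fin n) ℝ V)
    (g S : V →ₗ[ℝ] V →ₗ[ℝ] ℝ)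
    (R : V →ₗ[ℝ] V →ₗ[ℝ] V →ₗ[ℝ] V →ₗ[ℝ] ℝ)
    (ginv : Fin n → Fin n → ℝ)
    (hginv : ∀ a c, (∑ b, ginv a b * g (e b) (e c)) = if a = c then (1 : ℝ) else 0)
    (hgsym : ∀ X Y, g X Y = g Y X)
    (hSsym : ∀ X Y, S X Y = S Y X)
    (hR2 : ∀ X Y Z W, R X Y Z W = - R X Y W Z)
    (hR3 : ∀ X Y Z W, R X Y Z W = R Z W X Y)
    (hR4 : ∀ X Y Z W, R X Y Z W + R Y Z X W + R Z X Y W = 0)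
    (κ : ℝ) (hκ : κ = ∑ a, ∑ b, ginv a b * S (e a) (e b))
    (P : V → V → V → V → ℝ)
    (hP : ∀ X Y Z W, P X Y Z W =
      R X Y Z W - (1 / ((n : ℝ) - 1)) * (g X W * S Y Z - g Y W * S X Z)) :
    (∀ X Y, S X Y = (κ / (n : ℝ)) * g X Y) ↔
      (∀ X Y₁ Y₂ Y₃, P X Y₁ Y₂ Y₃ + P X Y₂ Y₃ Y₁ + P X Y₃ Y₁ Y₂ = 0) := by
  have h2n : (2 : ℝ) ≤ n := by exact_mod_cast hn
  have hn₁ : (n : ℝ) - 1 ≠ 0 := by linarith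
  have hPcyc : ∀ X Y₁ Y₂ Y₃, P X Y₁ Y₂ Y₃ + P X Y₂ Y₃ Y₁ + P X Y₃ Y₁ Y₂ =
      -(1 / ((n : ℝ) - 1)) * cyclicSumLastThree (projCurvCorrection g S) X Y₁ Y₂ Y₃ := by
    intro X Y₁ Y₂ Y₃
    simp only [hP, cyclicSumLastThree, projCurvCorrection]
    linear_combination cyclic_last_three_of_bianchi hR2 hR3 hR4 X Y₁ Y₂ Y₃
  simp only [hPcyc, neg_mul, neg_eq_zero, mul_eq_zero, one_div_ne_zero hn₁, false_or]
  constructor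
  · exact cyclicSumLastThree_projCurvCorrection_of_einstein hgsym
  · intro h X Y
    rw [hκ, div_mul_eq_mul_div, eq_div_iff (by linarith), mul_comm,
      einstein_of_cyclicSumLastThree_projCurvCorrection e hginv hgsym hSsym h X Y]

/-- A semi-Riemannian manifold of dimension `n ≥ 2` is Einstein
(`S = (κ/n) g`, with `κ` the scalar curvature, i.e. the `g`-trace of the Ricci
tensor `S`) if and only if its projective curvature tensor
`P(X,Y,Z,W) = R(X,Y,Z,W) − (1/(n−1))(g(X,W)S(Y,Z) − g(Y,W)S(X,Z))`
satisfies `P(X,Y₁,Y₂,Y₃) + P(X,Y₂,Y₃,Y₁) + P(X,Y₃,Y₁,Y₂) = 0` for all `X, Y₁, Y₂, Y₃`. -/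
theorem einstein_iff_projCurv_cyclic_last_three
    {V : Type*} [AddCommGroup V] [Module ℝ V] (n : ℕ) (hn : 2 ≤ n)
    (e : Module.Basis (Fin n) ℝ V)
    (g S : V →ₗ[ℝ] V →ₗ[ℝ] ℝ)
    (R : V →ₗ[ℝ] V →ₗ[ℝ] V →ₗ[ℝ] V →ₗ[ℝ] ℝ)
    (ginv : Fin n → Fin n → ℝ)
    (hginv : ∀ a c, (∑ b, ginv a b * g (e b) (e c)) = if a = c then (1 : ℝ) else 0)
    (hgsym : ∀ X Y, g X Y = g Y X)
    (hSsym : ∀ X Y, S X Y = S Y X)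
    (hR1 : ∀ X Y Z W, R X Y Z W = - R Y X Z W)
    (hR2 : ∀ X Y Z W, R X Y Z W = - R X Y W Z)
    (hR3 : ∀ X Y Z W, R X Y Z W = R Z W X Y)
    (hR4 : ∀ X Y Z W, R X Y Z W + R Y Z X W + R Z X Y W = 0)
    (κ : ℝ) (hκ : κ = ∑ a, ∑ b, ginv a b * S (e a) (e b))
    (P : V → V → V → V → ℝ)
    (hP : ∀ X Y Z W, P X Y Z W =
      R X Y Z W - (1 / ((n : ℝ) - 1)) * (g X W * S Y Z - g Y W * S X Z)) :
    (∀ X Y, S X Y = (κ / (n : ℝ)) * g X Y) ↔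
      (∀ X Y₁ Y₂ Y₃, P X Y₁ Y₂ Y₃ + P X Y₂ Y₃ Y₁ + P X Y₃ Y₁ Y₂ = 0) :=
  einstein_iff_projCurv_cyclic_last_three_general n hn e g S R ginv hginv hgsym hSsym hR2 hR3 hR4 κ
    hκ P hP
end

section
/- The Kasner metric ds² = dt² + t^{2a₁}dx² + t^{2a₂}dy² + t^{2a₃}dz² on {t > 0} × ℝ³, where a₁² + a₂² + a₃² = 1 and a₁ + a₂ + a₃ = 1, is Ricci flat: its Ricci tensor vanishes identically. -/
open Finset

/-- Partial derivative `∂ᵢ f` of a scalar function on `ℝ⁴`. -/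
noncomputable def pd (i : Fin 4) (f : (Fin 4 → ℝ) → ℝ) (x : Fin 4 → ℝ) : ℝ :=
  fderiv ℝ f x (Pi.single i 1)

/-- Christoffel symbols of the second kind
`Γ^a_{bc} = (1/2) g^{aα}(∂_b g_{αc} + ∂_c g_{αb} − ∂_α g_{bc})`. -/
noncomputable def christoffel (g : (Fin 4 → ℝ) → Matrix (Fin 4) (Fin 4) ℝ)
    (a b c : Fin 4) (x : Fin 4 → ℝ) : ℝ :=
  (1 / 2) * ∑ α, (g x)⁻¹ a α *
    (pd b (fun y => g y α c) x + pd c (fun y => g y α b) x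
      - pd α (fun y => g y b c) x)

/-- The (0,4) Riemann curvature tensor
`R_{abcd} = g_{aα}(∂_d Γ^α_{bc} − ∂_c Γ^α_{bd} + Γ^β_{bc}Γ^α_{βd} − Γ^β_{bd}Γ^α_{βc})`. -/
noncomputable def riemann (g : (Fin 4 → ℝ) → Matrix (Fin 4) (Fin 4) ℝ)
    (a b c d : Fin 4) (x : Fin 4 → ℝ) : ℝ :=
  ∑ α, g x a α *
    (pd d (christoffel g α b c) x - pd c (christoffel g α b d) x
      + ∑ β, (christoffel g β b c x * christoffel g α β d x
        - christoffel g β b d x * christoffel g α β c x))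

/-- The Ricci tensor `S_{ab} = g^{αβ} R_{αabβ}`. -/
noncomputable def ricci (g : (Fin 4 → ℝ) → Matrix (Fin 4) (Fin 4) ℝ)
    (a b : Fin 4) (x : Fin 4 → ℝ) : ℝ :=
  ∑ α, ∑ β, (g x)⁻¹ α β * riemann g α a b β x

/-- The Kasner metric `ds² = dt² + t^{2a₁}dx² + t^{2a₂}dy² + t^{2a₃}dz²`. -/
noncomputable def kasnerMetric (a₁ a₂ a₃ : ℝ) (x : Fin 4 → ℝ) :
    Matrix (Fin 4) (Fin 4) ℝ :=
  Matrix.diagonal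
    ![1, Real.rpow (x 0) (2 * a₁), Real.rpow (x 0) (2 * a₂),
      Real.rpow (x 0) (2 * a₃)]

/-!
With `p = (0, a₁, a₂, a₃)` the metric is `diag(t^{2pᵢ})`, a function of `t = x 0` alone. Its only
nonzero Christoffel symbols are `Γ⁰ᵢᵢ = -pᵢ t^{2pᵢ-1}` and `Γⁱ₀ᵢ = Γⁱᵢ₀ = pᵢ / t`, and a direct
computation gives a diagonal Ricci tensor with `S₀₀ = (∑ pᵢ - ∑ pᵢ²) / t²` and
`Sᵢᵢ = pᵢ (1 - ∑ pⱼ) t^{2pᵢ-2}`. The two Kasner conditions are exactly what makes both vanish.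
-/

open Filter Topology

theorem pd_comp_apply {f : ℝ → ℝ} {f' : ℝ} {x : Fin 4 → ℝ} {j : Fin 4}
    (hf : HasDerivAt f f' (x j)) (i : Fin 4) :
    pd i (fun y => f (y j)) x = if i = j then f' else 0 := by
  have h := hf.comp_hasFDerivAt x (hasFDerivAt_apply (𝕜 := ℝ) (F' := fun _ : Fin 4 => ℝ) j x)
  rw [pd, (show HasFDerivAt (fun y : Fin 4 → ℝ => f (y j)) _ x from h).fderiv]
  by_cases hij : i = j <;> simp [hij]

theorem pd_const (i : Fin 4) (c : ℝ) (x : Fin 4 → ℝ) : pd i (fun _ => c) x = 0 := by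
  simp [pd]

theorem Filter.EventuallyEq.pd_eq {f g : (Fin 4 → ℝ) → ℝ} {x : Fin 4 → ℝ} (h : f =ᶠ[𝓝 x] g)
    (i : Fin 4) : pd i f x = pd i g x := by
  rw [pd, pd, h.fderiv_eq]

noncomputable def powerLawMetric (p : Fin 4 → ℝ) (x : Fin 4 → ℝ) : Matrix (Fin 4) (Fin 4) ℝ :=
  Matrix.diagonal fun i => x 0 ^ (2 * p i)

noncomputable def powerLawChristoffel (p : Fin 4 → ℝ) (a b c : Fin 4) (t : ℝ) : ℝ :=
  (if a = 0 ∧ b = c then -p b else 0) * (t ^ (2 * p b) / t)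
    + ((if b = 0 ∧ a = c then p a else 0) + (if c = 0 ∧ a = b then p a else 0)) / t

theorem kasnerMetric_eq_powerLawMetric (a₁ a₂ a₃ : ℝ) :
    kasnerMetric a₁ a₂ a₃ = powerLawMetric ![0, a₁, a₂, a₃] := by
  ext x : 1
  rw [kasnerMetric, powerLawMetric]
  congr 1
  ext i
  fin_cases i <;> simp [Real.rpow_eq_pow]

theorem hasDerivAt_powerLawChristoffel (p : Fin 4 → ℝ) (a b c : Fin 4) {t : ℝ} (ht : 0 < t) :
    HasDerivAt (powerLawChristoffel p a b c)
      ((if a = 0 ∧ b = c then -p b else 0) * ((2 * p b - 1) * t ^ (2 * p b) / t ^ 2)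
        - ((if b = 0 ∧ a = c then p a else 0) + (if c = 0 ∧ a = b then p a else 0)) / t ^ 2)
      t := by
  have hpow := Real.hasDerivAt_rpow_const (x := t) (p := 2 * p b) (Or.inl ht.ne')
  rw [Real.rpow_sub_one ht.ne'] at hpow
  refine ((((hpow.div (hasDerivAt_id' t) ht.ne').const_mul _).add
    ((hasDerivAt_const t _).div (hasDerivAt_id' t) ht.ne')).congr_deriv ?_)
  field_simp
  ring

section powerLawMetric

variable {p x : Fin 4 → ℝ}

theorem powerLawMetric_apply (i j : Fin 4) :
    powerLawMetric p x i j = if i = j then x 0 ^ (2 * p i) else 0 :=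
  Matrix.diagonal_apply _ _ _

theorem inv_powerLawMetric (hx : 0 < x 0) :
    (powerLawMetric p x)⁻¹ = Matrix.diagonal fun i => (x 0 ^ (2 * p i))⁻¹ := by
  refine Matrix.inv_eq_right_inv ?_
  rw [powerLawMetric, Matrix.diagonal_mul_diagonal, ← Matrix.diagonal_one]
  congr 1
  ext i
  exact mul_inv_cancel₀ (by positivity)

theorem pd_powerLawMetric_apply (hx : 0 < x 0) (k i j : Fin 4) :
    pd k (fun y => powerLawMetric p y i j) x
      = if k = 0 ∧ i = j then 2 * p i * x 0 ^ (2 * p i) / x 0 else 0 := by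
  simp only [powerLawMetric_apply]
  by_cases hij : i = j
  · subst hij
    have h := Real.hasDerivAt_rpow_const (x := x 0) (p := 2 * p i) (Or.inl hx.ne')
    rw [Real.rpow_sub_one hx.ne'] at h
    simp [pd_comp_apply h k, mul_div_assoc]
  · simp [hij, pd_const]

theorem christoffel_powerLawMetric (hp : p 0 = 0) (hx : 0 < x 0) (a b c : Fin 4) :
    christoffel (powerLawMetric p) a b c x = powerLawChristoffel p a b c (x 0) := by
  simp only [christoffel, pd_powerLawMetric_apply hx, inv_powerLawMetric hx,
    Matrix.diagonal_apply, ite_mul, zero_mul, sum_ite_eq, mem_univ, if_true,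
    powerLawChristoffel]
  have hdiag (P : Prop) [Decidable P] :
      (x 0 ^ (2 * p a))⁻¹ * (if P then 2 * p a * x 0 ^ (2 * p a) / x 0 else 0)
        = 2 * (if P then p a else 0) / x 0 := by
    have : x 0 ^ (2 * p a) ≠ 0 := by positivity
    split_ifs <;> simp [field]
  have htime :
      (x 0 ^ (2 * p a))⁻¹ * (if a = 0 ∧ b = c then 2 * p b * x 0 ^ (2 * p b) / x 0 else 0)
        = 2 * (if a = 0 ∧ b = c then p b * (x 0 ^ (2 * p b) / x 0) else 0) := by
    split_ifs with h
    · rw [h.1, hp, mul_zero, Real.rpow_zero, inv_one]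
      ring
    · simp
  rw [mul_sub, mul_add, hdiag, hdiag, htime]
  split_ifs <;> ring

theorem pd_christoffel_powerLawMetric (hp : p 0 = 0) (hx : 0 < x 0) (i a b c : Fin 4) :
    pd i (christoffel (powerLawMetric p) a b c) x
      = if i = 0 then deriv (powerLawChristoffel p a b c) (x 0) else 0 := by
  have hlocal : christoffel (powerLawMetric p) a b c =ᶠ[𝓝 x]
      fun y => powerLawChristoffel p a b c (y 0) := by
    filter_upwards [(isOpen_lt continuous_const (continuous_apply 0)).mem_nhds hx] with y hy
    exact christoffel_powerLawMetric hp hy a b c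
  rw [hlocal.pd_eq,
    pd_comp_apply (hasDerivAt_powerLawChristoffel p a b c hx).differentiableAt.hasDerivAt]

theorem ricci_powerLawMetric (hp : p 0 = 0) (hx : 0 < x 0) (a b : Fin 4) :
    ricci (powerLawMetric p) a b x =
      if a = b then
        if a = 0 then (∑ i, p i - ∑ i, p i ^ 2) / x 0 ^ 2
        else p a * (1 - ∑ i, p i) * x 0 ^ (2 * p a) / x 0 ^ 2
      else 0 := by
  have hderiv a b c := (hasDerivAt_powerLawChristoffel p a b c hx).deriv
  simp only [ricci, riemann, inv_powerLawMetric hx, powerLawMetric_apply, Matrix.diagonal_apply,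
    pd_christoffel_powerLawMetric hp hx, christoffel_powerLawMetric hp hx, hderiv, ite_mul,
    zero_mul, sum_ite_eq, mem_univ, if_true]
  fin_cases a <;> fin_cases b <;> simp [Fin.sum_univ_four, powerLawChristoffel, hp] <;>
    field_simp <;> ring

end powerLawMetric

/-- The Kasner metric with exponents satisfying `a₁² + a₂² + a₃² = 1` and
`a₁ + a₂ + a₃ = 1` is Ricci flat on `{t > 0} × ℝ³`. -/
theorem kasner_ricci_flat (a₁ a₂ a₃ : ℝ)
    (hsq : a₁ ^ 2 + a₂ ^ 2 + a₃ ^ 2 = 1) (hsum : a₁ + a₂ + a₃ = 1) :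
    ∀ x : Fin 4 → ℝ, 0 < x 0 →
      ∀ a b : Fin 4, ricci (kasnerMetric a₁ a₂ a₃) a b x = 0 := by
  intro x hx a b
  have hexp_sum : ∑ i, ![0, a₁, a₂, a₃] i = 1 := by
    simp [Fin.sum_univ_four, ← hsum, add_assoc]
  have hexp_sq_sum : ∑ i, ![0, a₁, a₂, a₃] i ^ 2 = 1 := by
    simp [Fin.sum_univ_four, ← hsq, add_assoc]
  rw [kasnerMetric_eq_powerLawMetric, ricci_powerLawMetric rfl hx, hexp_sum, hexp_sq_sum]
  simp
end
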